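/- arXiv:2007.01772 — 4 statements merged into one kernel-verified Lean document; each statement's English description precedes it below -/
import Mathlib

section
/- Let R be a commutative ring, A an R-module, and {,} a derivative Lie algebra structure on A with symbol λ satisfying λ_{f·a} = f·λ_a + Λ(df ⊗ a) for a squiggle Λ. Antisymmetry of the bracket forces the squiggle symmetry identity: Λ(df ⊗ a)(g)·b = −Λ(dg ⊗ b)(f)·a for all a, b ∈ A and f, g ∈ R. -/
/-! Expand `{f·a, g·b}` with the Leibniz rule in the second slot, antisymmetry in the first and
the symbol identity. The expansion of `{g·b, f·a}` is the same with `(a,f)` and `(b,g)` swapped;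
adding the two, antisymmetry cancels everything except the two squiggle terms. -/

section SquiggleSymmetry

variable {R : Type*} [CommRing R] [Algebra ℝ R] {A : Type*} [AddCommGroup A] [Module R A]
  {br : A → A → A} {lam : A → Derivation ℝ R R} {Lam : R → A → Derivation ℝ R R}

theorem br_smul_smul_eq (hanti : ∀ a b, br a b = - br b a)
    (hleib : ∀ (a : A) (f : R) (b : A), br a (f • b) = f • br a b + lam a f • b)
    (hsymb : ∀ (f : R) (a : A) (g : R), lam (f • a) g = f * lam a g + Lam f a g)
    (a b : A) (f g : R) :
    br (f • a) (g • b) =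
      (g * f) • br a b + (f * lam a g) • b - (g * lam b f) • a + Lam f a g • b := by
  rw [hleib, hsymb, hanti (f • a) b, hleib b f a, hanti b a]
  module

end SquiggleSymmetry

theorem stmt6_general (R : Type*) [CommRing R] [Algebra ℝ R]
    (A : Type*) [AddCommGroup A] [Module R A]
    (br : A → A → A)
    (hanti : ∀ a b, br a b = - br b a)
    (lam : A → Derivation ℝ R R)
    (hleib : ∀ (a : A) (f : R) (b : A), br a (f • b) = f • br a b + lam a f • b)
    (Lam : R → A → Derivation ℝ R R)
    (hsymb : ∀ (f : R) (a : A) (g : R), lam (f • a) g = f * lam a g + Lam f a g) :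
    ∀ (a b : A) (f g : R), (Lam f a g) • b = -((Lam g b f) • a) := by
  intro a b f g
  have hfg := br_smul_smul_eq hanti hleib hsymb a b f g
  have hgf := br_smul_smul_eq hanti hleib hsymb b a g f
  have hba : br b a = - br a b := hanti b a
  have hswap : br (f • a) (g • b) = - br (g • b) (f • a) := hanti _ _
  rw [hfg, hgf, hba] at hswap
  linear_combination (norm := module) hswap

/-- For a derivative Lie algebra on an `R`-module `A` with symbol `λ` and squiggle `Λ`
(so `λ_{f·a} = f·λ_a + Λ(df⊗a)`), antisymmetry forces the squiggle symmetry identity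
`Λ(df⊗a)(g)·b = −Λ(dg⊗b)(f)·a`. -/
theorem stmt6 (R : Type*) [CommRing R] [Algebra ℝ R]
    (A : Type*) [AddCommGroup A] [Module ℝ A] [Module R A]
    (br : A → A → A)
    (hanti : ∀ a b, br a b = - br b a)
    (hadd : ∀ a b c, br (a + b) c = br a c + br b c)
    (hsmul : ∀ (r : ℝ) (a b : A), br (r • a) b = r • br a b)
    (lam : A → Derivation ℝ R R)
    (hleib : ∀ (a : A) (f : R) (b : A), br a (f • b) = f • br a b + lam a f • b)
    (Lam : R → A → Derivation ℝ R R)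
    (hsymb : ∀ (f : R) (a : A) (g : R), lam (f • a) g = f * lam a g + Lam f a g) :
    ∀ (a b : A) (f g : R), (Lam f a g) • b = -((Lam g b f) • a) :=
  stmt6_general R A br hanti lam hleib Lam hsymb
end

section
/- Let A be a vector bundle of rank at least 2 over a manifold M carrying a derivative Lie algebra structure (Γ(A), [,]) with symbol λ : Γ(A) → Γ(TM). Then λ is C^∞(M)-linear, i.e. λ_{f·a} = f·λ_a for all f ∈ C^∞(M) and a ∈ Γ(A); hence the structure is a Lie algebroid. -/
/-!
Expanding `[f•a, g•b]` once by the right Leibniz rule and once by the left one (obtained from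
antisymmetry) shows that the defect `δ(f, a, g) := λ_{f•a} g - f λ_a g` satisfies
`δ(f, a, g) • b = -δ(g, b, f) • a` for all sections `a, b`. Testing this against two linearly
independent sections forces `δ = 0`.
-/

theorem exists_linearIndependent_pair_of_two_le_rank {R A : Type*} [CommRing R] [Nontrivial R]
    [AddCommGroup A] [Module R A] [Module.Free R A] (hrank : 2 ≤ Module.rank R A) :
    ∃ x y : A, LinearIndependent R ![x, y] := by
  let bas := Module.Free.chooseBasis R A
  rw [Module.Free.rank_eq_card_chooseBasisIndex] at hrank
  obtain ⟨i, j, hij⟩ := Cardinal.two_le_iff.mp hrank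
  refine ⟨bas i, bas j, ?_⟩
  have hinj : Function.Injective ![i, j] := by
    intro m n
    fin_cases m <;> fin_cases n <;> simp [hij, Ne.symm hij]
  convert bas.linearIndependent.comp _ hinj using 1
  ext m
  fin_cases m <;> rfl

theorem eq_zero_of_forall_smul_eq_smul {R A : Type*} [CommRing R] [AddCommGroup A] [Module R A]
    [Module.Free R A] (hrank : 2 ≤ Module.rank R A) {φ ψ : A → R}
    (h : ∀ a b, φ a • b = ψ b • a) (a : A) : φ a = 0 := by
  nontriviality R
  obtain ⟨x, y, hxy⟩ := exists_linearIndependent_pair_of_two_le_rank hrank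
  have hψx : ψ x = 0 := by
    have := LinearIndependent.pair_iff.mp hxy (φ y) (-ψ x) (by rw [h, neg_smul, add_neg_cancel])
    exact neg_eq_zero.mp this.2
  exact (LinearIndependent.pair_iff.mp hxy (φ a) 0
    (by rw [h, hψx, zero_smul, zero_smul, add_zero])).1

section Bracket

variable {R A : Type*} [CommRing R] [AddCommGroup A] [Module R A]
  {br : A → A → A} {lam : A → R → R}
  (hanti : ∀ a b, br a b = -br b a)
  (hleib : ∀ (a : A) (f : R) (b : A), br a (f • b) = f • br a b + lam a f • b)
include hanti hleib

theorem bracket_smul_left (f : R) (a b : A) : br (f • a) b = f • br a b - lam b f • a := by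
  rw [hanti, hleib b f a, hanti b a]
  module

theorem symbol_defect_smul_comm (f g : R) (a b : A) :
    (lam (f • a) g - f * lam a g) • b = -(lam (g • b) f - g * lam b f) • a := by
  have h := hleib (f • a) g b
  rw [bracket_smul_left hanti hleib, bracket_smul_left hanti hleib, hleib] at h
  linear_combination (norm := module) -h

end Bracket

theorem stmt7_general (R : Type*) [CommRing R] [Algebra ℝ R]
    (A : Type*) [AddCommGroup A] [Module R A] [Module.Free R A]
    (hrank : 2 ≤ Module.rank R A)
    (br : A → A → A)
    (hanti : ∀ a b, br a b = - br b a)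
    (lam : A → Derivation ℝ R R)
    (hleib : ∀ (a : A) (f : R) (b : A), br a (f • b) = f • br a b + lam a f • b) :
    ∀ (f : R) (a : A) (g : R), lam (f • a) g = f * lam a g := by
  intro f a g
  rw [← sub_eq_zero]
  exact eq_zero_of_forall_smul_eq_smul hrank (φ := fun a => lam (f • a) g - f * lam a g)
    (ψ := fun b => -(lam (g • b) f - g * lam b f))
    (fun a b => symbol_defect_smul_comm hanti hleib f g a b) a

/-- A derivative Lie algebra structure on (the sections of) a vector bundle of rank at
least 2 — modelled as a free module of rank ≥ 2 over `R = C^∞(M)` — has `C^∞(M)`-linear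
symbol: `λ_{f·a} = f·λ_a`; hence it is a Lie algebroid. -/
theorem stmt7 (R : Type*) [CommRing R] [Algebra ℝ R]
    (A : Type*) [AddCommGroup A] [Module ℝ A] [Module R A] [Module.Free R A]
    (hrank : 2 ≤ Module.rank R A)
    (br : A → A → A)
    (hanti : ∀ a b, br a b = - br b a)
    (hjac : ∀ a b c, br a (br b c) + br b (br c a) + br c (br a b) = 0)
    (hadd : ∀ a b c, br (a + b) c = br a c + br b c)
    (hsmul : ∀ (r : ℝ) (a b : A), br (r • a) b = r • br a b)
    (lam : A → Derivation ℝ R R)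
    (hleib : ∀ (a : A) (f : R) (b : A), br a (f • b) = f • br a b + lam a f • b)
    (Lam : R → A → Derivation ℝ R R)
    (hsymb : ∀ (f : R) (a : A) (g : R), lam (f • a) g = f * lam a g + Lam f a g) :
    ∀ (f : R) (a : A) (g : R), lam (f • a) g = f * lam a g :=
  stmt7_general R A hrank br hanti lam hleib
end

section
/- Let M be a smooth manifold, π ∈ Γ(∧²TM) a bivector field and R ∈ Γ(TM) a vector field, and define the Lichnerowicz bracket {f,g} := π(df,dg) + f·R[g] − g·R[f] on C^∞(M). This bracket is antisymmetric and ℝ-bilinear, and it satisfies the Jacobi identity if and only if [R,π] = 0 and [π,π] + 2 R∧π = 0, where [,] denotes the Schouten–Nijenhuis bracket. -/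
/-!
Expanding the Jacobiator of `{f,g} = π(f,g) + f·R g − g·R f` with the Leibniz rule and the
antisymmetry of `π` splits it as
`J(f,g,h) = E(f,g,h) + f·D(g,h) + g·D(h,f) + h·D(f,g)`, where `D` is the Lie derivative of `π`
along `R` and `E` is the cyclic sum `π(f,π(g,h)) + R f·π(g,h) + …`. Taking `f = 1` kills `E` and
all but one `D`-term, so the Jacobi identity forces `D = 0`, and then `J = E`.
-/

namespace Lichnerowicz

variable {k A : Type*} [CommRing k] [CommRing A] [Algebra k A]
  (pi : A →ₗ[k] Derivation k A A) (Rv : Derivation k A A)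

def bracket (f g : A) : A := pi f g + f * Rv g - g * Rv f

/-- `[R, π](df, dg)`. -/
def lieDeriv (f g : A) : A := Rv (pi f g) - pi (Rv f) g - pi f (Rv g)

/-- `(½[π,π] + R∧π)(df, dg, dh)`, up to the sign convention for the Schouten bracket. -/
def schoutenTerm (f g h : A) : A :=
  (pi f (pi g h) + pi g (pi h f) + pi h (pi f g)) + (Rv f * pi g h + Rv g * pi h f + Rv h * pi f g)

def jacobiator (f g h : A) : A :=
  bracket pi Rv f (bracket pi Rv g h) + bracket pi Rv g (bracket pi Rv h f)
    + bracket pi Rv h (bracket pi Rv f g)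

theorem bracket_add_left (f g h : A) :
    bracket pi Rv (f + g) h = bracket pi Rv f h + bracket pi Rv g h := by
  simp only [bracket, map_add, Derivation.add_apply]
  ring

theorem bracket_smul_left (c : k) (f g : A) :
    bracket pi Rv (c • f) g = c • bracket pi Rv f g := by
  simp only [bracket, map_smul, Derivation.map_smul, Derivation.smul_apply, smul_sub, smul_add,
    smul_mul_assoc, mul_smul_comm]

variable {pi}

theorem bracket_comm (hpi : ∀ f g : A, pi f g = -pi g f) (f g : A) :
    bracket pi Rv f g = -bracket pi Rv g f := by
  unfold bracket
  linear_combination hpi f g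

theorem apply_one_left (hpi : ∀ f g : A, pi f g = -pi g f) (g : A) : pi 1 g = 0 := by
  rw [hpi, Derivation.map_one_eq_zero, neg_zero]

theorem jacobiator_eq (hpi : ∀ f g : A, pi f g = -pi g f) (f g h : A) :
    jacobiator pi Rv f g h = schoutenTerm pi Rv f g h
      + f * lieDeriv pi Rv g h + g * lieDeriv pi Rv h f + h * lieDeriv pi Rv f g := by
  simp only [jacobiator, bracket, schoutenTerm, lieDeriv, map_add, map_sub, Derivation.leibniz,
    smul_eq_mul]
  linear_combination -Rv h * hpi g f - Rv g * hpi f h - Rv f * hpi h g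
    + f * hpi h (Rv g) + g * hpi f (Rv h) + h * hpi g (Rv f)

theorem jacobiator_one_left (hpi : ∀ f g : A, pi f g = -pi g f) (g h : A) :
    jacobiator pi Rv 1 g h = lieDeriv pi Rv g h := by
  rw [jacobiator_eq Rv hpi]
  simp only [schoutenTerm, lieDeriv, apply_one_left hpi, Derivation.map_one_eq_zero,
    Derivation.zero_apply, map_zero]
  ring

theorem jacobi_iff (hpi : ∀ f g : A, pi f g = -pi g f) :
    (∀ f g h : A, jacobiator pi Rv f g h = 0) ↔
      (∀ f g : A, lieDeriv pi Rv f g = 0) ∧ ∀ f g h : A, schoutenTerm pi Rv f g h = 0 := by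
  constructor
  · intro hJ
    have hD (g h : A) : lieDeriv pi Rv g h = 0 := by
      rw [← jacobiator_one_left Rv hpi, hJ]
    refine ⟨hD, fun f g h => ?_⟩
    simpa [jacobiator_eq Rv hpi, hD] using hJ f g h
  · rintro ⟨hD, hE⟩ f g h
    simp [jacobiator_eq Rv hpi, hD, hE]

end Lichnerowicz

/-- Lichnerowicz bracket: for a bivector `π` (an alternating biderivation of
`R = C^∞(M)`) and a vector field `Rv`, the bracket
`{f,g} = π(df,dg) + f·Rv[g] − g·Rv[f]` is antisymmetric and ℝ-bilinear, and it
satisfies the Jacobi identity iff `[Rv,π] = 0` and `[π,π] + 2 Rv∧π = 0`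
(Schouten–Nijenhuis brackets, evaluated on exact differentials). -/
theorem stmt9 (R : Type*) [CommRing R] [Algebra ℝ R]
    (pi : R →ₗ[ℝ] Derivation ℝ R R)
    (hpi_anti : ∀ f g : R, pi f g = - pi g f)
    (Rv : Derivation ℝ R R) :
    (∀ f g : R,
      pi f g + f * Rv g - g * Rv f = -(pi g f + g * Rv f - f * Rv g)) ∧
    (∀ f g h : R,
      pi (f + g) h + (f + g) * Rv h - h * Rv (f + g)
        = (pi f h + f * Rv h - h * Rv f) + (pi g h + g * Rv h - h * Rv g)) ∧
    (∀ (c : ℝ) (f g : R),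
      pi (c • f) g + (c • f) * Rv g - g * Rv (c • f)
        = c • (pi f g + f * Rv g - g * Rv f)) ∧
    (((∀ f g h : R,
        (fun a b : R => pi a b + a * Rv b - b * Rv a) f
            ((fun a b : R => pi a b + a * Rv b - b * Rv a) g h)
        + (fun a b : R => pi a b + a * Rv b - b * Rv a) g
            ((fun a b : R => pi a b + a * Rv b - b * Rv a) h f)
        + (fun a b : R => pi a b + a * Rv b - b * Rv a) h
            ((fun a b : R => pi a b + a * Rv b - b * Rv a) f g) = 0)
      ↔
      ((∀ f g : R, Rv (pi f g) - pi (Rv f) g - pi f (Rv g) = 0) ∧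
       (∀ f g h : R,
         (pi f (pi g h) + pi g (pi h f) + pi h (pi f g))
           + (Rv f * pi g h + Rv g * pi h f + Rv h * pi f g) = 0)))) :=
  ⟨Lichnerowicz.bracket_comm Rv hpi_anti, Lichnerowicz.bracket_add_left pi Rv,
    Lichnerowicz.bracket_smul_left pi Rv, Lichnerowicz.jacobi_iff Rv hpi_anti⟩
end

section
/- Let (Γ(L₁), {,}₁) and (Γ(L₂), {,}₂) be Jacobi structures and B : L₁ → L₂ a factor (regular line bundle morphism) covering φ : M₁ → M₂, with pull-back B* : Γ(L₂) → Γ(L₁) defined by (B*s)(x) = B_x^{-1}(s(φ(x))). Then B is a Jacobi map (B*{s,r}₂ = {B*s, B*r}₁ for all s,r) if and only if the sections P₁*B*s − P₂*s, for s ∈ Γ(L₂), span a Lie subalgebra of the product Jacobi structure on L₁ ⋉ conj(L₂), i.e. the lgraph of B is coisotropic. -/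
/-!
The sections `p₁(B* s) − p₂ s` are the image of the linear map `p₁ ∘ B* − p₂`, so they span
exactly that image. Since the two factors of the product bracket do not interact, the bracket of
two such sections is `p₁{B* s, B* s'}₁ − p₂{s, s'}₂`. Because `p₁` and `p₂` have independent
images, a section `p₁ a − p₂ b` lies in the image of `p₁ ∘ B* − p₂` exactly when `a = B* b`;
for `a = {B* s, B* s'}₁`, `b = {s, s'}₂` this is the Jacobi map condition.
-/

namespace JacobiGraph

variable {R A₁ A₂ C : Type*} [CommRing R]
  [AddCommGroup A₁] [Module R A₁] [AddCommGroup A₂] [Module R A₂] [AddCommGroup C] [Module R C]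

def graphSectionMap (Bstar : A₂ →ₗ[R] A₁) (p₁ : A₁ →ₗ[R] C) (p₂ : A₂ →ₗ[R] C) : A₂ →ₗ[R] C :=
  p₁ ∘ₗ Bstar - p₂

theorem span_range_eq_range_graphSectionMap (Bstar : A₂ →ₗ[R] A₁) (p₁ : A₁ →ₗ[R] C)
    (p₂ : A₂ →ₗ[R] C) :
    Submodule.span R (Set.range fun r => p₁ (Bstar r) - p₂ r) =
      LinearMap.range (graphSectionMap Bstar p₁ p₂) :=
  Submodule.span_eq (LinearMap.range (graphSectionMap Bstar p₁ p₂))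

theorem sub_mem_range_graphSectionMap_iff (Bstar : A₂ →ₗ[R] A₁) {p₁ : A₁ →ₗ[R] C}
    {p₂ : A₂ →ₗ[R] C} (hindep : ∀ a b, p₁ a = p₂ b → a = 0 ∧ b = 0) (a : A₁) (b : A₂) :
    p₁ a - p₂ b ∈ LinearMap.range (graphSectionMap Bstar p₁ p₂) ↔ a = Bstar b := by
  constructor
  · rintro ⟨r, hr⟩
    have hsplit : p₁ (Bstar r - a) = p₂ (r - b) := by
      simp only [graphSectionMap, LinearMap.sub_apply, LinearMap.comp_apply] at hr
      simp only [map_sub]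
      linear_combination (norm := abel) hr
    obtain ⟨ha, hb⟩ := hindep _ _ hsplit
    rw [← sub_eq_zero.mp hb, sub_eq_zero.mp ha]
  · rintro rfl
    exact ⟨b, rfl⟩

theorem bracket_sub_sub {br₁ : A₁ →ₗ[R] A₁ →ₗ[R] A₁} {br₂ : A₂ →ₗ[R] A₂ →ₗ[R] A₂}
    {p₁ : A₁ →ₗ[R] C} {p₂ : A₂ →ₗ[R] C} {brC : C →ₗ[R] C →ₗ[R] C}
    (h₁₁ : ∀ a a', brC (p₁ a) (p₁ a') = p₁ (br₁ a a'))
    (h₂₂ : ∀ b b', brC (p₂ b) (p₂ b') = -p₂ (br₂ b b'))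
    (h₁₂ : ∀ a b, brC (p₁ a) (p₂ b) = 0) (h₂₁ : ∀ b a, brC (p₂ b) (p₁ a) = 0)
    (a a' : A₁) (b b' : A₂) :
    brC (p₁ a - p₂ b) (p₁ a' - p₂ b') = p₁ (br₁ a a') - p₂ (br₂ b b') := by
  simp only [map_sub, LinearMap.sub_apply, h₁₁, h₂₂, h₁₂, h₂₁]
  abel

end JacobiGraph

/-- Jacobi maps as coisotropic relations: let `(A₁,br₁)` and `(A₂,br₂)` be the section
spaces of two Jacobi structures, `Bstar` the pull-back of a factor `B`, and `C` the
sections of the line product `L₁ ⋉ conj(L₂)` carrying the product Jacobi bracket `brC`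
characterized on pull-backs `p₁, p₂` by `brC(p₁s,p₁s') = p₁(br₁ s s')`,
`brC(p₂s,p₂s') = −p₂(br₂ s s')`, `brC(p₁s,p₂r) = 0` (opposite structure on the second
factor). Then `B` is a Jacobi map (`Bstar(br₂ s s') = br₁(Bstar s)(Bstar s')`) iff the
sections `p₁(Bstar s) − p₂ s` span a Lie subalgebra, i.e. the lgraph of `B` is
coisotropic. -/
theorem stmt16 (A1 A2 C : Type*)
    [AddCommGroup A1] [Module ℝ A1] [AddCommGroup A2] [Module ℝ A2]
    [AddCommGroup C] [Module ℝ C]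
    (br1 : A1 →ₗ[ℝ] A1 →ₗ[ℝ] A1) (br2 : A2 →ₗ[ℝ] A2 →ₗ[ℝ] A2)
    (Bstar : A2 →ₗ[ℝ] A1)
    (p1 : A1 →ₗ[ℝ] C) (p2 : A2 →ₗ[ℝ] C)
    (brC : C →ₗ[ℝ] C →ₗ[ℝ] C)
    (h11 : ∀ s s', brC (p1 s) (p1 s') = p1 (br1 s s'))
    (h22 : ∀ s s', brC (p2 s) (p2 s') = - p2 (br2 s s'))
    (h12 : ∀ s r, brC (p1 s) (p2 r) = 0)
    (h21 : ∀ r s, brC (p2 r) (p1 s) = 0)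
    (hindep : ∀ (a : A1) (b : A2), p1 a = p2 b → a = 0 ∧ b = 0) :
    (∀ s s' : A2, Bstar (br2 s s') = br1 (Bstar s) (Bstar s')) ↔
    (∀ s s' : A2,
      brC (p1 (Bstar s) - p2 s) (p1 (Bstar s') - p2 s')
        ∈ Submodule.span ℝ (Set.range fun r : A2 => p1 (Bstar r) - p2 r)) := by
  simp only [JacobiGraph.span_range_eq_range_graphSectionMap,
    JacobiGraph.bracket_sub_sub h11 h22 h12 h21,
    JacobiGraph.sub_mem_range_graphSectionMap_iff Bstar hindep, eq_comm]
end
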